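/- For f(x,u,p,q) = −x·p⁴q³ + u·p³q³ on the open set {p ≠ 0, q ≠ 0}: (i) H(x,u,p) = 1/p² satisfies the Riccati equation −(2/J₃)D̂ₓH + H² = K; (ii) b(x,u,p) = p satisfies D̂ₓb = −(J₃H)b; (iii) a₁ ≡ 1 satisfies D̂ₓa₁ = J₃(H+I₅)a₁, (a₁)_u = (HI₇ − Q)a₁, (a₁)_p = (I₄(H+I₅) − I₇/J₃)a₁, (a₁)_q = 0; (iv) φ(x,u,p) = p satisfies D̂ₓφ = −J₃/b, φ_u = −I₇/b, φ_p = −I₄/b; (v) with χ(x,u,p) = −x, ψ(x,u,p) = u − xp, η := D̂ₓχ/D̂ₓφ and f̄ := φ³·ψ, one has D̂ₓη = −(J₃/b)f̄, η_u = ((H+I₅)²/2 + I₂/(2J₃²))b²a₁ − (I₇/b)f̄, η_p = ((H+I₅)/J₃ + I₁/(3J₃²))b²a₁ − (I₄/b)f̄, η_q = b²a₁/J₃², D̂ₓχ = −(J₃/b)η, χ_u = −(H+I₅)b·a₁ − (I₇/b)η, χ_p = −b·a₁/J₃ − (I₄/b)η, I₇D̂ₓψ = J₃(ψ_u − a₁),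 ψ_x = χφ_x − p·a₁, and ψ_p = −(I₄/b)χ. -/

import Mathlib

/-!
Invariants of the third-order ODE `u''' = f(x, u, u', u'')` under contact
transformations, following Cartan's equivalence method.
We write `p = u'`, `q = u''`.
-/

noncomputable section

/-- The real cube root of a real number. -/
def cbrt (y : ℝ) : ℝ := if 0 ≤ y then y ^ ((1 : ℝ)/3) else -((-y) ^ ((1 : ℝ)/3))

/-- Functions of `(x, u, p, q)`. -/
abbrev Fn : Type := ℝ → ℝ → ℝ → ℝ → ℝ

/-- Functions of `(x, u, p)`. -/
abbrev Fn3 : Type := ℝ → ℝ → ℝ → ℝ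

/-- Partial derivative in `x` of a function of `(x,u,p,q)`. -/
def pdx (g : Fn) : Fn := fun x u p q => deriv (fun t => g t u p q) x
/-- Partial derivative in `u` of a function of `(x,u,p,q)`. -/
def pdu (g : Fn) : Fn := fun x u p q => deriv (fun t => g x t p q) u
/-- Partial derivative in `p` of a function of `(x,u,p,q)`. -/
def pdp (g : Fn) : Fn := fun x u p q => deriv (fun t => g x u t q) p
/-- Partial derivative in `q` of a function of `(x,u,p,q)`. -/
def pdq (g : Fn) : Fn := fun x u p q => deriv (fun t => g x u p t) q

/-- Partial derivative in `x` of a function of `(x,u,p)`. -/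
def pdx3 (g : Fn3) : Fn3 := fun x u p => deriv (fun t => g t u p) x
/-- Partial derivative in `u` of a function of `(x,u,p)`. -/
def pdu3 (g : Fn3) : Fn3 := fun x u p => deriv (fun t => g x t p) u
/-- Partial derivative in `p` of a function of `(x,u,p)`. -/
def pdp3 (g : Fn3) : Fn3 := fun x u p => deriv (fun t => g x u t) p

/-- Lift of a function of `(x,u,p)` to a function of `(x,u,p,q)`, constant in `q`. -/
def lift (g : Fn3) : Fn := fun x u p _ => g x u p

/-- The total derivative operator `D̂ₓ = ∂ₓ + p ∂ᵤ + q ∂ₚ + f ∂_q` of the ODE `u''' = f`. -/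
def Dhat (f g : Fn) : Fn := fun x u p q =>
  pdx g x u p q + p * pdu g x u p q + q * pdp g x u p q + f x u p q * pdq g x u p q

/-- `I₁ = −f_q`. -/
def I1 (f : Fn) : Fn := fun x u p q => -(pdq f x u p q)

/-- `I₂ = −(2/9)I₁² − f_p − (1/3)D̂ₓI₁`. -/
def I2 (f : Fn) : Fn := fun x u p q =>
  -(2/9) * (I1 f x u p q)^2 - pdp f x u p q - (1/3) * Dhat f (I1 f) x u p q

/-- `I₃ = −(1/3)I₁I₂ − f_u − (1/2)D̂ₓI₂`. -/
def I3 (f : Fn) : Fn := fun x u p q =>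
  -(1/3) * I1 f x u p q * I2 f x u p q - pdu f x u p q - (1/2) * Dhat f (I2 f) x u p q

/-- `J₃`, the real cube root of `I₃`. -/
def J3 (f : Fn) : Fn := fun x u p q => cbrt (I3 f x u p q)

/-- `I₄ = (J₃)_q`. -/
def I4 (f : Fn) : Fn := pdq (J3 f)

/-- `I₅ = (1/(3J₃²))(I₁J₃ + 3D̂ₓJ₃)`. -/
def I5 (f : Fn) : Fn := fun x u p q =>
  (1 / (3 * (J3 f x u p q)^2)) * (I1 f x u p q * J3 f x u p q + 3 * Dhat f (J3 f) x u p q)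

/-- `I₇ = −(I₅)_q J₃²`. -/
def I7 (f : Fn) : Fn := fun x u p q => -(pdq (I5 f) x u p q) * (J3 f x u p q)^2

/-- `I₉ = 2J₃D̂ₓI₅ − I₂ + J₃²I₅²`. -/
def I9 (f : Fn) : Fn := fun x u p q =>
  2 * J3 f x u p q * Dhat f (I5 f) x u p q - I2 f x u p q
    + (J3 f x u p q)^2 * (I5 f x u p q)^2

/-- `K = I₉/J₃²`. -/
def Kinv (f : Fn) : Fn := fun x u p q => I9 f x u p q / (J3 f x u p q)^2

/-- `Q = −(I₁I₇ + 3J₃²(I₅)_p + 3(J₃)_u − 3J₃I₄D̂ₓI₅)/(3J₃)`. -/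
def Qinv (f : Fn) : Fn := fun x u p q =>
  -(I1 f x u p q * I7 f x u p q + 3 * (J3 f x u p q)^2 * pdp (I5 f) x u p q
      + 3 * pdu (J3 f) x u p q
      - 3 * J3 f x u p q * I4 f x u p q * Dhat f (I5 f) x u p q)
    / (3 * J3 f x u p q)

/-- `I₆ = (2/3)(J₃)_q I₁ − (1/3)(I₁)_q J₃ − 2(J₃)_p + 2J₃I₄I₅`. -/
def I6 (f : Fn) : Fn := fun x u p q =>
  (2/3) * pdq (J3 f) x u p q * I1 f x u p q - (1/3) * pdq (I1 f) x u p q * J3 f x u p q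
    - 2 * pdp (J3 f) x u p q + 2 * J3 f x u p q * I4 f x u p q * I5 f x u p q

/-- `I₈ = (I₄)_q`. -/
def I8 (f : Fn) : Fn := pdq (I4 f)

/-- `I₁₀ = I₄D̂ₓI₇ − J₃(I₇)_p + J₃²(I₄/J₃)_u`. -/
def I10 (f : Fn) : Fn := fun x u p q =>
  I4 f x u p q * Dhat f (I7 f) x u p q - J3 f x u p q * pdp (I7 f) x u p q
    + (J3 f x u p q)^2 *
      pdu (fun x' u' p' q' => I4 f x' u' p' q' / J3 f x' u' p' q') x u p q

/-- `I₁₁ = (J₃)_u − D̂ₓI₇`. -/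
def I11 (f : Fn) : Fn := fun x u p q =>
  pdu (J3 f) x u p q - Dhat f (I7 f) x u p q

/-- `I₁₂`. -/
def I12 (f : Fn) : Fn := fun x u p q =>
  6 * I1 f x u p q * J3 f x u p q *
      (I5 f x u p q * I7 f x u p q - I4 f x u p q * Dhat f (I5 f) x u p q)
    - 18 * (J3 f x u p q)^3 * I4 f x u p q
    + 6 * pdp (I5 f) x u p q * I1 f x u p q * (J3 f x u p q)^2
    - 18 * I2 f x u p q * J3 f x u p q * I4 f x u p q * I5 f x u p q
    - 18 * J3 f x u p q * I7 f x u p q * Dhat f (I5 f) x u p q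
    + 18 * (J3 f x u p q)^2 * pdu (I5 f) x u p q
    + 18 * I2 f x u p q * Dhat f (I4 f) x u p q
    + 2 * (I1 f x u p q)^2 * I7 f x u p q
    - 9 * pdp (I2 f) x u p q * J3 f x u p q
    + 6 * (J3 f x u p q)^2 *
        pdu (fun x' u' p' q' => I1 f x' u' p' q' / J3 f x' u' p' q') x u p q
    + 36 * I2 f x u p q * I7 f x u p q

/-- `I₁₃ = (J₃I₄I₅ − I₇)D̂ₓK + J₃K_u − J₃²I₅K_p`. -/
def I13 (f : Fn) : Fn := fun x u p q =>
  (J3 f x u p q * I4 f x u p q * I5 f x u p q - I7 f x u p q) * Dhat f (Kinv f) x u p q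
    + J3 f x u p q * pdu (Kinv f) x u p q
    - (J3 f x u p q)^2 * I5 f x u p q * pdp (Kinv f) x u p q

/-- `I₁₄ = K_q`. -/
def I14 (f : Fn) : Fn := pdq (Kinv f)

/-- `I₁₅ = I₄D̂ₓK − J₃K_p`. -/
def I15 (f : Fn) : Fn := fun x u p q =>
  I4 f x u p q * Dhat f (Kinv f) x u p q - J3 f x u p q * pdp (Kinv f) x u p q

/-!
All invariants of this `f` are explicit: `I₁ = 3p³q²(px − u)`, `I₂ = 0`, `I₃ = (−pq)³`, so
`J₃ = −pq`, `I₄ = −p`, `I₅ = −1/p²`, `I₇ = 0`, `K = −3/p⁴` and `Q = 0`. Since `H = −I₅` and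
`η = D̂ₓ(−x)/D̂ₓp = −1/q`, every identity of (i)–(v) becomes an identity between rational
functions of `x, u, p, q`.
-/

lemma cbrt_pow_three (a : ℝ) : cbrt (a ^ 3) = a := by
  have h : ∀ b : ℝ, 0 ≤ b → (b ^ 3) ^ ((1 : ℝ) / 3) = b := fun b hb => by
    rw [one_div]; exact_mod_cast Real.pow_rpow_inv_natCast hb three_ne_zero
  rcases le_or_gt 0 a with ha | ha
  · rw [cbrt, if_pos (by positivity), h a ha]
  · have hodd : Odd 3 := by decide
    rw [cbrt, if_neg (not_le.2 (hodd.pow_neg ha)), ← hodd.neg_pow, h _ (by linarith), neg_neg]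

lemma pdq_lift (g : Fn3) (x u p q : ℝ) : pdq (lift g) x u p q = 0 :=
  deriv_const q (g x u p)

lemma Dhat_lift (f : Fn) (g : Fn3) (x u p q : ℝ) :
    Dhat f (lift g) x u p q = pdx3 g x u p + p * pdu3 g x u p + q * pdp3 g x u p := by
  rw [Dhat, pdq_lift, mul_zero, add_zero]
  rfl

local notation "F" => (fun x u p q => -x * p^4 * q^3 + u * p^3 * q^3 : Fn)

lemma I1_example : I1 F = fun x u p q => 3 * p^3 * q^2 * (p * x - u) := by
  ext x u p q
  simp (disch := fun_prop) only [I1, pdq, neg_mul, deriv_fun_add, deriv.fun_neg', deriv_fun_mul,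
    deriv_const', zero_mul, deriv_fun_pow, Nat.cast_ofNat, Nat.add_one_sub_one, mul_zero, add_zero,
    deriv_id'', mul_one, zero_add, neg_add_rev, neg_neg]
  ring

lemma I2_example : I2 F = fun _ _ _ _ => 0 := by
  ext x u p q
  simp only [I2, Dhat, I1_example, pdx, pdu, pdp, pdq]
  simp (disch := fun_prop) only [neg_mul, deriv_fun_add, deriv.fun_neg', deriv_fun_mul, deriv_const',
    zero_mul, deriv_fun_pow, Nat.cast_ofNat, Nat.add_one_sub_one, deriv_id'', mul_one, zero_add,
    mul_zero, add_zero, one_div, pow_one, deriv_fun_sub, deriv_const_mul_id', sub_zero,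
    deriv_const_sub_id', mul_neg, one_mul, sub_self]
  ring

lemma J3_example : J3 F = fun _ _ p q => -(p * q) := by
  ext x u p q
  have hI3 : I3 F x u p q = (-(p * q)) ^ 3 := by
    simp only [I3, I1_example, I2_example, Dhat, pdx, pdu, pdp, pdq]
    simp (disch := fun_prop) only [one_div, neg_mul, mul_zero, deriv_fun_add, deriv_const',
      deriv_fun_mul, deriv_id'', one_mul, deriv_fun_pow, Nat.cast_ofNat, Nat.add_one_sub_one,
      add_zero, zero_add, zero_sub, sub_zero]
    ring
  rw [J3, hI3, cbrt_pow_three]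

lemma I4_example : I4 F = fun _ _ p _ => -p := by
  ext x u p q
  simp only [I4, pdq, J3_example]
  simp

-- Also true at `p = 0`, where both sides are `0` because `x / 0 = 0`.
lemma I5_example {q : ℝ} (hq : q ≠ 0) (x u p : ℝ) : I5 F x u p q = -1 / p ^ 2 := by
  simp only [I5, I1_example, J3_example, Dhat, pdx, pdu, pdp, pdq]
  simp (disch := fun_prop) only [one_div, mul_inv_rev, mul_neg, deriv_const', mul_zero, add_zero,
    deriv.fun_neg', deriv_fun_mul, deriv_id'', one_mul, zero_add, neg_mul, deriv_const_mul_id']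
  rcases eq_or_ne p 0 with rfl | hp
  · simp
  · field_simp
    ring

lemma pdq_I5_example {q : ℝ} (hq : q ≠ 0) (x u p : ℝ) : pdq (I5 F) x u p q = 0 := by
  have hloc : (fun t => I5 F x u p t) =ᶠ[nhds q] fun _ => -1 / p ^ 2 :=
    (eventually_ne_nhds hq).mono fun t ht => I5_example ht x u p
  simp only [pdq, hloc.deriv_eq, deriv_const]

lemma pdp_I5_example {p q : ℝ} (hp : p ≠ 0) (hq : q ≠ 0) (x u : ℝ) :
    pdp (I5 F) x u p q = 2 / p ^ 3 := by
  simp only [pdp, I5_example hq]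
  simp (disch := first | fun_prop | positivity) only [deriv_fun_div, deriv_const', zero_mul,
    deriv_fun_pow, Nat.cast_ofNat, Nat.add_one_sub_one, pow_one, deriv_id'', mul_one, neg_mul,
    one_mul, sub_neg_eq_add, zero_add]
  field_simp

lemma I7_example {q : ℝ} (hq : q ≠ 0) (x u p : ℝ) : I7 F x u p q = 0 := by
  rw [I7, pdq_I5_example hq, neg_zero, zero_mul]

lemma Dhat_I5_example {p q : ℝ} (hp : p ≠ 0) (hq : q ≠ 0) (x u : ℝ) :
    Dhat F (I5 F) x u p q = 2 * q / p ^ 3 := by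
  simp only [Dhat, pdx, pdu, pdp_I5_example hp hq, pdq_I5_example hq, I5_example hq, deriv_const]
  ring

lemma Kinv_example {p q : ℝ} (hp : p ≠ 0) (hq : q ≠ 0) (x u : ℝ) :
    Kinv F x u p q = -3 / p ^ 4 := by
  simp only [Kinv, I9, Dhat_I5_example hp hq, I2_example, J3_example, I5_example hq]
  field_simp
  ring

lemma Qinv_example {p q : ℝ} (hp : p ≠ 0) (hq : q ≠ 0) (x u : ℝ) : Qinv F x u p q = 0 := by
  simp only [Qinv, I7_example hq, pdp_I5_example hp hq, Dhat_I5_example hp hq, I4_example,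
    J3_example, pdu, deriv_const]
  field_simp
  ring

/-- For `f(x,u,p,q) = −x·p⁴q³ + u·p³q³` on `{p ≠ 0, q ≠ 0}`, the
explicit functions `H = 1/p²`, `b = p`, `a₁ = 1`, `φ = p`, `χ = −x`, `ψ = u − xp` solve
the systems (i)–(v) of Proposition 4.2, with `η := D̂ₓχ/D̂ₓφ` and `f̄ := φ³·ψ`. -/
theorem construction_example2
    (f : Fn) (hfdef : f = fun x u p q => -x * p^4 * q^3 + u * p^3 * q^3)
    (H : Fn3) (hH : H = fun _ _ p => 1 / p^2)
    (b : Fn3) (hb : b = fun _ _ p => p)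
    (a1 : Fn3) (ha1 : a1 = fun _ _ _ => 1)
    (φ : Fn3) (hφ : φ = fun _ _ p => p)
    (χ : Fn3) (hχ : χ = fun x _ _ => -x)
    (ψ : Fn3) (hψ : ψ = fun x u p => u - x*p)
    (η : Fn)
    (hη : η = fun x u p q => Dhat f (lift χ) x u p q / Dhat f (lift φ) x u p q)
    (fbar : Fn3) (hfbar : fbar = fun x u p => (φ x u p)^3 * ψ x u p) :
    ∀ x u p q : ℝ, p ≠ 0 → q ≠ 0 →
      -- (i)  the Riccati equation for H
      (-(2 / J3 f x u p q) * Dhat f (lift H) x u p q + (H x u p)^2 = Kinv f x u p q) ∧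
      -- (ii)  the equation for b
      (Dhat f (lift b) x u p q = -(J3 f x u p q * H x u p) * b x u p) ∧
      -- (iii)  the system for a₁
      (Dhat f (lift a1) x u p q
         = J3 f x u p q * (H x u p + I5 f x u p q) * a1 x u p ∧
       pdu3 a1 x u p = (H x u p * I7 f x u p q - Qinv f x u p q) * a1 x u p ∧
       pdp3 a1 x u p
         = (I4 f x u p q * (H x u p + I5 f x u p q)
             - I7 f x u p q / J3 f x u p q) * a1 x u p ∧
       pdq (lift a1) x u p q = 0) ∧
      -- (iv)  the system for φ
      (Dhat f (lift φ) x u p q = -(J3 f x u p q) / b x u p ∧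
       pdu3 φ x u p = -(I7 f x u p q) / b x u p ∧
       pdp3 φ x u p = -(I4 f x u p q) / b x u p) ∧
      -- (v)  the system for η, χ, ψ
      (Dhat f η x u p q = -(J3 f x u p q / b x u p) * fbar x u p ∧
       pdu η x u p q
         = ((H x u p + I5 f x u p q)^2 / 2
              + I2 f x u p q / (2 * (J3 f x u p q)^2)) * (b x u p)^2 * a1 x u p
             - (I7 f x u p q / b x u p) * fbar x u p ∧
       pdp η x u p q
         = ((H x u p + I5 f x u p q) / J3 f x u p q
              + I1 f x u p q / (3 * (J3 f x u p q)^2)) * (b x u p)^2 * a1 x u p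
             - (I4 f x u p q / b x u p) * fbar x u p ∧
       pdq η x u p q = (b x u p)^2 * a1 x u p / (J3 f x u p q)^2 ∧
       Dhat f (lift χ) x u p q = -(J3 f x u p q / b x u p) * η x u p q ∧
       pdu3 χ x u p
         = -(H x u p + I5 f x u p q) * b x u p * a1 x u p
             - (I7 f x u p q / b x u p) * η x u p q ∧
       pdp3 χ x u p
         = -(b x u p * a1 x u p / J3 f x u p q)
             - (I4 f x u p q / b x u p) * η x u p q ∧
       I7 f x u p q * Dhat f (lift ψ) x u p q
         = J3 f x u p q * (pdu3 ψ x u p - a1 x u p) ∧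
       pdx3 ψ x u p = χ x u p * pdx3 φ x u p - p * a1 x u p ∧
       pdp3 ψ x u p = -(I4 f x u p q / b x u p) * χ x u p) := by
  subst hfdef hH hb ha1 hφ hχ hψ hfbar
  obtain rfl : η = fun _ _ _ q => -1 / q := by
    simpa [Dhat_lift, pdx3, pdu3, pdp3] using hη
  intro x u p q hp hq
  simp only [Dhat_lift, pdq_lift, pdx3, pdu3, pdp3, and_true]
  simp only [Dhat, pdx, pdu, pdp, pdq, I1_example, I2_example, J3_example, I4_example,
    I5_example hq, I7_example hq, Kinv_example hp hq, Qinv_example hp hq]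
  simp (disch := first | fun_prop | positivity) only [deriv_const, deriv_id'', deriv_neg'',
    deriv_const_sub, deriv_sub_const, deriv_mul_const_field, deriv_const_mul_id, deriv_const_div,
    deriv_const_div_id, deriv_pow_field]
  and_intros <;> field_simp <;> ring

end
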